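/- arXiv:2407.03447 — 7 statements merged into one kernel-verified Lean document; each statement's English description precedes it below -/
import Mathlib

section
/- Let α = y² - 1 and β = y + (y² - 1)·f(y) where f(y) is an arbitrary polynomial in ℝ[y]. Then α is not congruent to a square of a polynomial modulo β in ℝ[y]; that is, there do not exist polynomials s, t ∈ ℝ[y] with α - s² = β·t. -/
open Polynomial

theorem not_square_mod_beta (f : Polynomial ℝ) :
    ¬ ∃ s t : Polynomial ℝ,
      (X ^ 2 - 1) - s ^ 2 = (X + (X ^ 2 - 1) * f) * t := by
  rintro ⟨s, t, h⟩
  set β : Polynomial ℝ := X + (X ^ 2 - 1) * f with hβ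
  have hcont : Continuous (fun x : ℝ => β.eval x) := β.continuous
  have hm1 : β.eval (-1) = -1 := by simp [hβ]
  have h1 : β.eval 1 = 1 := by simp [hβ]
  have hmem : (0 : ℝ) ∈ Set.Icc (β.eval (-1)) (β.eval 1) := by
    rw [hm1, h1]; constructor <;> norm_num
  obtain ⟨ξ, hξ, hroot⟩ := intermediate_value_Icc (by norm_num : (-1:ℝ) ≤ 1)
    hcont.continuousOn hmem
  have hlt : ξ ^ 2 - 1 < 0 := by
    rcases eq_or_lt_of_le hξ.1 with h | h
    · exfalso; rw [← h] at hroot; simp only [hm1] at hroot; norm_num at hroot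
    rcases eq_or_lt_of_le hξ.2 with h' | h'
    · exfalso; rw [h'] at hroot; simp only [h1] at hroot; norm_num at hroot
    nlinarith
  have := congrArg (fun p => Polynomial.eval ξ p) h
  simp [hroot] at this
  nlinarith [sq_nonneg (s.eval ξ)]
end

section
/- Let q be a prime, k a field of characteristic different from q containing a primitive q-th root of unity, and ω ∈ k a unit that is not a q-th power in k. Let α = (y-1)^(q-1)·(y-ω) and β = y + (y-1)^(q-1)·(y-ω)·f(y) for an arbitrary polynomial f(y) ∈ k[y]. Then α is not congruent to a q-th power modulo β in k[y]. -/
/-!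
Pass to `A = k[y]/(β)`: the congruence makes the image of `α` a `q`-th power in `A`, so its
norm `N_{A/k}(α)` is a `q`-th power in `k`. The norm of `y - c` in `A` is
`(-1)^deg β · β(c) / lc β`, and since `α` vanishes at `1` and at `ω`, `β(1) = 1` and `β(ω) = ω`.
Hence `N(α) = ε^q · ω` with `ε = (-1)^deg β / lc β ≠ 0`, so `ω` would be a `q`-th power.
-/

open Polynomial

theorem PowerBasis.norm_gen_sub_algebraMap {R S : Type*} [CommRing R] [Ring S] [Algebra R S]
    (pb : PowerBasis R S) (c : R) :
    Algebra.norm R (pb.gen - algebraMap R S c) = (-1) ^ pb.dim * (minpoly R pb.gen).eval c := by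
  rw [Algebra.norm_eq_matrix_det pb.basis, map_sub, AlgHom.commutes, ← neg_sub, Matrix.det_neg,
    Matrix.algebraMap_eq_diagonal, Pi.algebraMap_def, Algebra.algebraMap_self, RingHom.id_apply,
    ← Matrix.scalar_apply, ← Matrix.eval_charpoly, charpoly_leftMulMatrix, Fintype.card_fin]

theorem AdjoinRoot.norm_root_sub_algebraMap {K : Type*} [Field K] {f : K[X]} (hf : f ≠ 0) (c : K) :
    Algebra.norm K (root f - algebraMap K (AdjoinRoot f) c)
      = (-1) ^ f.natDegree * (f.eval c / f.leadingCoeff) := by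
  rw [← powerBasis_gen hf, (powerBasis hf).norm_gen_sub_algebraMap, powerBasis_dim, powerBasis_gen,
    minpoly_root hf, eval_mul, eval_C, div_eq_mul_inv]

theorem not_qth_power_mod_beta_general
    (q : ℕ) (hq : q.Prime) (k : Type*) [Field k]
    (ω : k) (hωq : ¬ ∃ c : k, c ^ q = ω)
    (f : Polynomial k) :
    ¬ ∃ s t : Polynomial k,
      (X - 1) ^ (q - 1) * (X - C ω) - s ^ q
        = (X + (X - 1) ^ (q - 1) * (X - C ω) * f) * t := by
  rintro ⟨s, t, h⟩
  set α : k[X] := (X - 1) ^ (q - 1) * (X - C ω)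
  set β : k[X] := X + α * f
  have hβ1 : β.eval 1 = 1 := by simp [β, α, zero_pow (Nat.sub_ne_zero_of_lt hq.one_lt)]
  have hβω : β.eval ω = ω := by simp [β, α]
  have hβ : β ≠ 0 := fun h0 ↦ by simp [h0] at hβ1
  set ε : k := (-1) ^ β.natDegree / β.leadingCoeff
  have hε : ε ≠ 0 := div_ne_zero (by simp) (leadingCoeff_ne_zero.mpr hβ)
  have hα : AdjoinRoot.mk β α = AdjoinRoot.mk β s ^ q := by
    rw [← map_pow, AdjoinRoot.mk_eq_mk]
    exact ⟨t, h⟩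
  have hN1 : Algebra.norm k (AdjoinRoot.root β - 1) = ε := by
    rw [← map_one (algebraMap k _), AdjoinRoot.norm_root_sub_algebraMap hβ, hβ1, mul_one_div]
  have hNω : Algebra.norm k (AdjoinRoot.root β - AdjoinRoot.of β ω) = ε * ω := by
    rw [← AdjoinRoot.algebraMap_eq, AdjoinRoot.norm_root_sub_algebraMap hβ, hβω, mul_div_assoc',
      div_mul_eq_mul_div]
  have hNα : Algebra.norm k (AdjoinRoot.mk β α) = ε ^ q * ω := by
    simp only [α, map_mul, map_pow, map_sub, AdjoinRoot.mk_X, map_one, AdjoinRoot.mk_C, hN1, hNω]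
    rw [← mul_assoc, ← pow_succ, Nat.sub_add_cancel hq.one_le]
  refine hωq ⟨Algebra.norm k (AdjoinRoot.mk β s) / ε, ?_⟩
  rw [div_pow, ← map_pow, ← hα, hNα, mul_div_cancel_left₀ _ (pow_ne_zero q hε)]

theorem not_qth_power_mod_beta
    (q : ℕ) (hq : q.Prime) (k : Type*) [Field k] (hchar : ringChar k ≠ q)
    (ζ : k) (hζ : IsPrimitiveRoot ζ q)
    (ω : k) (hω : ω ≠ 0) (hωq : ¬ ∃ c : k, c ^ q = ω)
    (f : Polynomial k) :
    ¬ ∃ s t : Polynomial k,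
      (X - 1) ^ (q - 1) * (X - C ω) - s ^ q
        = (X + (X - 1) ^ (q - 1) * (X - C ω) * f) * t :=
  not_qth_power_mod_beta_general q hq k ω hωq f
end

section
/- Let k be an algebraically closed field of characteristic ≠ 2. There do not exist polynomials s, t ∈ k[x,y] such that x - s² = (y² - x(x²-1))·t. -/
/-!
View `k[x, y]` as `k[x][y]`. Modulo the monic quadratic `y² - c`, `c = x(x² - 1)`, every polynomial
reduces to some `a + b y` with `a, b ∈ k[x]`, and `(a + b y)² ≡ a² + b² c + 2ab y`; so `x` would
equal `a² + b² c` in `k[x]`. That is impossible by degrees: `a²` has even degree and `b² c` odd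
degree at least `3`, so their leading terms cannot cancel.
-/

open MvPolynomial

namespace Polynomial

lemma exists_eq_sq_add_sq_mul_of_X_sq_sub_C_dvd {R : Type*} [CommRing R] [Nontrivial R]
    {c f : R} {S : R[X]} (h : X ^ 2 - C c ∣ C f - S ^ 2) : ∃ a b : R, f = a ^ 2 + b ^ 2 * c := by
  set q : R[X] := X ^ 2 - C c
  have hq : q.Monic := monic_X_pow_sub_C c two_ne_zero
  have hr : (S %ₘ q).degree ≤ 1 := by
    have := degree_modByMonic_lt S hq
    rw [degree_eq_natDegree hq.ne_zero, natDegree_X_pow_sub_C] at this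
    exact Order.le_of_lt_succ this
  set a := (S %ₘ q).coeff 0
  set b := (S %ₘ q).coeff 1
  obtain ⟨d, hS⟩ : ∃ d, S = C b * X + C a + q * d :=
    ⟨S /ₘ q, by rw [← eq_X_add_C_of_degree_le_one hr, modByMonic_add_div]⟩
  -- `(a + bY)² ≡ (a² + b²c) + 2abY` modulo `q`, and the remainder has degree `< 2`.
  set g : R[X] := C (f - a ^ 2 - b ^ 2 * c) - C (2 * a * b) * X
  have hg : q ∣ g := by
    have : g = (C f - S ^ 2) + q * (C (b ^ 2) + 2 * (C b * X + C a) * d + q * d ^ 2) := by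
      rw [hS]; simp only [g, q, map_sub, map_mul, map_pow, map_ofNat]; ring
    rw [this]
    exact h.add (dvd_mul_right _ _)
  have hg0 : g = 0 := by
    rw [← (modByMonic_eq_zero_iff_dvd hq).mpr hg, eq_comm, modByMonic_eq_self_iff hq,
      degree_eq_natDegree hq.ne_zero, natDegree_X_pow_sub_C]
    refine (degree_sub_le _ _).trans_lt (max_lt ?_ ?_)
    · exact degree_C_le.trans_lt (by norm_num)
    · exact (degree_C_mul_X_le _).trans_lt (by norm_num)
  refine ⟨a, b, sub_eq_zero.mp ?_⟩
  simpa only [g, coeff_sub, coeff_C_zero, mul_coeff_zero, coeff_X_zero, mul_zero, sub_zero,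
    sub_sub, coeff_zero] using congrArg (coeff · 0) hg0

lemma natDegree_le_natDegree_sq_add_sq_mul {R : Type*} [CommSemiring R] [NoZeroDivisors R]
    {a b c : R[X]} (hc : Odd c.natDegree) (hb : b ≠ 0) :
    c.natDegree ≤ (a ^ 2 + b ^ 2 * c).natDegree := by
  have hc0 : c ≠ 0 := by rintro rfl; simp at hc
  have hbc : (b ^ 2 * c).natDegree = 2 * b.natDegree + c.natDegree := by
    rw [natDegree_mul (pow_ne_zero 2 hb) hc0, natDegree_pow]
  have ha : (a ^ 2).natDegree = 2 * a.natDegree := natDegree_pow a 2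
  have hne : (a ^ 2).natDegree ≠ (b ^ 2 * c).natDegree := by
    obtain ⟨n, hn⟩ := hc
    omega
  rcases hne.lt_or_gt with hlt | hgt
  · rw [natDegree_add_eq_right_of_natDegree_lt hlt]
    omega
  · rw [natDegree_add_eq_left_of_natDegree_lt hgt]
    omega

lemma X_ne_sq_add_sq_mul {R : Type*} [CommSemiring R] [NoZeroDivisors R] [Nontrivial R]
    {c : R[X]} (hc : Odd c.natDegree) (hc1 : 1 < c.natDegree) (a b : R[X]) :
    X ≠ a ^ 2 + b ^ 2 * c := by
  intro h
  rcases eq_or_ne b 0 with rfl | hb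
  · have := congrArg natDegree h
    rw [natDegree_X, zero_pow two_ne_zero, zero_mul, add_zero, natDegree_pow] at this
    omega
  · have := natDegree_le_natDegree_sq_add_sq_mul (a := a) hc hb
    rw [← h, natDegree_X] at this
    omega

end Polynomial

theorem x_not_square_mod_elliptic_poly_general
    (k : Type*) [Field k] :
    ¬ ∃ s t : MvPolynomial (Fin 2) k,
      X 0 - s ^ 2 = ((X 1) ^ 2 - X 0 * ((X 0) ^ 2 - 1)) * t := by
  rintro ⟨s, t, h⟩
  let φ := aeval (R := k) ![Polynomial.C Polynomial.X, (Polynomial.X : Polynomial (Polynomial k))]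
  let c : Polynomial k := Polynomial.X * (Polynomial.X ^ 2 - 1)
  have hdvd : Polynomial.X ^ 2 - Polynomial.C c ∣ Polynomial.C Polynomial.X - φ s ^ 2 :=
    ⟨φ t, by simpa [φ, c] using congrArg φ h⟩
  have hc : c.natDegree = 3 := by simp only [c]; compute_degree!
  obtain ⟨a, b, hab⟩ := Polynomial.exists_eq_sq_add_sq_mul_of_X_sq_sub_C_dvd hdvd
  exact Polynomial.X_ne_sq_add_sq_mul (by rw [hc]; decide) (by rw [hc]; decide) a b hab

theorem x_not_square_mod_elliptic_poly
    (k : Type*) [Field k] [IsAlgClosed k] (h2 : (2 : k) ≠ 0) :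
    ¬ ∃ s t : MvPolynomial (Fin 2) k,
      X 0 - s ^ 2 = ((X 1) ^ 2 - X 0 * ((X 0) ^ 2 - 1)) * t :=
  x_not_square_mod_elliptic_poly_general k
end

section
/- Let k be an algebraically closed field of characteristic ≠ 2. There exist elements s, t in the ring k[x][[y]] (power series in y with polynomial coefficients in x) such that x - s² = (y² - x(x²-1))·t. -/
/-!
By Hensel's lemma the cubic `x³ - x - y²` over `k⟦y⟧` has three roots lifting `0`, `1`, `-1`;
their differences are units, so the cubic is their product `(x - a)(x - b)(x - c)` and, by the
Chinese remainder theorem, `x` is a square modulo it as soon as `a`, `b`, `c` are squares in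
`k⟦y⟧`. The roots `b`, `c` have nonzero constant term, hence are squares; the root `a` lifting
`0` is `y² (a² - 1)⁻¹`, and `(a² - 1)⁻¹` has constant term `-1`, so `a` is a square too.
Finally the congruence in `k⟦y⟧[x]` is transported to `k[x]⟦y⟧`.
-/

open scoped Polynomial

namespace Polynomial

variable {R : Type*} [CommRing R] {ι : Type*} {r : ι → R}

theorem pairwise_isCoprime_X_sub_C (hr : Pairwise fun i j => IsUnit (r i - r j)) :
    Pairwise fun i j => IsCoprime (X - C (r i)) (X - C (r j)) :=
  fun _ _ hij => isCoprime_X_sub_C_of_isUnit_sub (hr hij)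

theorem Monic.eq_prod_X_sub_C_of_isRoot [Fintype ι] [Nontrivial R] {p : R[X]} (hp : p.Monic)
    (hdeg : p.natDegree ≤ Fintype.card ι) (hr : Pairwise fun i j => IsUnit (r i - r j))
    (hroot : ∀ i, p.IsRoot (r i)) : p = ∏ i, (X - C (r i)) :=
  eq_of_monic_of_dvd_of_natDegree_le (monic_prod_of_monic _ _ fun i _ => monic_X_sub_C (r i)) hp
    (Fintype.prod_dvd_of_coprime (pairwise_isCoprime_X_sub_C hr)
      fun i => dvd_iff_isRoot.2 (hroot i))
    (by simpa using hdeg)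

theorem exists_prod_X_sub_C_dvd_X_sub_sq [Fintype ι]
    (hr : Pairwise fun i j => IsUnit (r i - r j)) (hsq : ∀ i, IsSquare (r i)) :
    ∃ s : R[X], (∏ i, (X - C (r i))) ∣ X - s ^ 2 := by
  choose v hv using hsq
  obtain ⟨s, hs⟩ := Ideal.pi_quotient_surjective (I := fun i => Ideal.span {X - C (r i)})
    (fun i j hij => (Ideal.isCoprime_span_singleton_iff _ _).2
      (pairwise_isCoprime_X_sub_C hr hij))
    fun i => Ideal.Quotient.mk _ (C (v i))
  refine ⟨s, Fintype.prod_dvd_of_coprime (pairwise_isCoprime_X_sub_C hr) fun i => ?_⟩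
  rw [← Ideal.mem_span_singleton, ← Ideal.Quotient.eq_zero_iff_mem, map_sub, map_pow, hs,
    ← map_pow, ← map_sub, Ideal.Quotient.eq_zero_iff_mem, Ideal.mem_span_singleton, hv, sq,
    C_mul]

end Polynomial

namespace PowerSeries

theorem exists_isRoot_constantCoeff_eq {R : Type*} [CommRing R] {f : R⟦X⟧[X]} (hf : f.Monic)
    {c : R} (hroot : (f.map constantCoeff).IsRoot c)
    (hsimple : IsUnit ((f.map constantCoeff).derivative.eval c)) :
    ∃ a, f.IsRoot a ∧ constantCoeff a = c := by
  have hconst (g : R⟦X⟧[X]) : constantCoeff (g.eval (C c)) = (g.map constantCoeff).eval c := by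
    rw [← Polynomial.eval_map_apply, constantCoeff_C]
  have hunit : IsUnit (f.derivative.eval (C c)) := by
    rwa [isUnit_iff_constantCoeff, hconst, ← Polynomial.derivative_map]
  obtain ⟨a, ha, hac⟩ := HenselianRing.is_henselian (I := Ideal.span {X}) f hf (C c)
    (by rwa [Ideal.mem_span_singleton, X_dvd_iff, hconst]) (hunit.map _)
  refine ⟨a, ha, ?_⟩
  rwa [Ideal.mem_span_singleton, X_dvd_iff, map_sub, constantCoeff_C, sub_eq_zero] at hac

variable {k : Type*} [Field k] [IsAlgClosed k]

theorem isSquare_of_constantCoeff_ne_zero (h2 : (2 : k) ≠ 0) {u : k⟦X⟧}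
    (hu : constantCoeff u ≠ 0) : IsSquare u := by
  obtain ⟨c, hc⟩ := IsAlgClosed.exists_pow_nat_eq (constantCoeff u) two_pos
  have hc0 : c ≠ 0 := fun h => hu (by rw [← hc, h, zero_pow two_ne_zero])
  have hf : (Polynomial.X ^ 2 - Polynomial.C u : k⟦X⟧[X]).Monic :=
    Polynomial.monic_X_pow_sub_C u two_ne_zero
  obtain ⟨a, ha, -⟩ := exists_isRoot_constantCoeff_eq hf (c := c) (by simp [hc])
    (by simpa [one_add_one_eq_two] using mul_ne_zero h2 hc0)
  exact ⟨a, by simpa [sub_eq_zero, sq, eq_comm] using ha⟩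

theorem isSquare_of_mul_sq_sub_one_eq_X_sq (h2 : (2 : k) ≠ 0) {r : k⟦X⟧}
    (hr : r * (r ^ 2 - 1) = X ^ 2) : IsSquare r := by
  by_cases h0 : constantCoeff r = 0
  · have hu : constantCoeff (r ^ 2 - 1) ≠ 0 := by simp [h0]
    obtain ⟨v, hv⟩ := isSquare_of_constantCoeff_ne_zero h2 (u := (r ^ 2 - 1)⁻¹)
      (by simpa [constantCoeff_inv] using hu)
    refine ⟨X * v, ?_⟩
    calc r = r * (r ^ 2 - 1) * (r ^ 2 - 1)⁻¹ := by
          rw [mul_assoc, PowerSeries.mul_inv_cancel _ hu, mul_one]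
      _ = X * v * (X * v) := by rw [hr, hv]; ring
  · exact isSquare_of_constantCoeff_ne_zero h2 h0

end PowerSeries

open scoped PowerSeries

/-- `x³ - x - y²`, i.e. the curve `y² = x³ - x` as a monic cubic in `x` over `k⟦y⟧`. -/
noncomputable def cubicInX (k : Type*) [Field k] : k⟦X⟧[X] :=
  Polynomial.X ^ 3 - Polynomial.X - Polynomial.C (PowerSeries.X ^ 2)

section cubicInX

variable {k : Type*} [Field k]

theorem monic_cubicInX : (cubicInX k).Monic := by
  unfold cubicInX; monicity!

theorem natDegree_cubicInX : (cubicInX k).natDegree = 3 := by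
  unfold cubicInX; compute_degree!

theorem isRoot_cubicInX_iff {r : k⟦X⟧} :
    (cubicInX k).IsRoot r ↔ r * (r ^ 2 - 1) = PowerSeries.X ^ 2 := by
  simp only [cubicInX, Polynomial.IsRoot.def, Polynomial.eval_sub, Polynomial.eval_pow,
    Polynomial.eval_X, Polynomial.eval_C]
  constructor <;> intro h <;> linear_combination h

theorem exists_roots_cubicInX (h2 : (2 : k) ≠ 0) :
    ∃ r : Fin 3 → k⟦X⟧, (∀ i, (cubicInX k).IsRoot (r i)) ∧
      Pairwise fun i j => IsUnit (r i - r j) := by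
  have hlift (c : k) (hc : c ^ 3 = c) (hc' : 3 * c ^ 2 - 1 ≠ 0) :
      ∃ a, (cubicInX k).IsRoot a ∧ PowerSeries.constantCoeff a = c :=
    PowerSeries.exists_isRoot_constantCoeff_eq monic_cubicInX (by simp [cubicInX, hc])
      (by norm_num [cubicInX]; exact hc')
  obtain ⟨a, ha, ha0⟩ := hlift 0 (by ring) (by norm_num)
  obtain ⟨b, hb, hb1⟩ := hlift 1 (by ring) (by norm_num [h2])
  obtain ⟨c, hc, hc1⟩ := hlift (-1) (by ring) (by norm_num [h2])
  refine ⟨![a, b, c], fun i => by fin_cases i <;> assumption, fun i j hij => ?_⟩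
  dsimp only
  rw [PowerSeries.isUnit_iff_constantCoeff, isUnit_iff_ne_zero]
  fin_cases i <;> fin_cases j <;> first | exact absurd rfl hij | norm_num [ha0, hb1, hc1, h2]

theorem eval₂_cubicInX :
    (cubicInX k).eval₂ (PowerSeries.map Polynomial.C) (PowerSeries.C Polynomial.X) =
      PowerSeries.C (Polynomial.X * (Polynomial.X ^ 2 - 1)) - PowerSeries.X ^ 2 := by
  simp only [cubicInX, Polynomial.eval₂_sub, Polynomial.eval₂_pow, Polynomial.eval₂_X,
    Polynomial.eval₂_C, map_pow, PowerSeries.map_X, map_mul, map_sub, map_one]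
  ring

end cubicInX

open PowerSeries

theorem x_square_mod_elliptic_in_kx_y
    (k : Type*) [Field k] [IsAlgClosed k] (h2 : (2 : k) ≠ 0) :
    ∃ s t : PowerSeries (Polynomial k),
      (PowerSeries.C : Polynomial k →+* PowerSeries (Polynomial k)) Polynomial.X - s ^ 2
        = ((PowerSeries.X : PowerSeries (Polynomial k)) ^ 2
            - (PowerSeries.C : Polynomial k →+* PowerSeries (Polynomial k))
                (Polynomial.X * (Polynomial.X ^ 2 - 1))) * t := by
  obtain ⟨r, hroot, hr⟩ := exists_roots_cubicInX h2
  have hsq (i : Fin 3) : IsSquare (r i) :=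
    isSquare_of_mul_sq_sub_one_eq_X_sq h2 (isRoot_cubicInX_iff.1 (hroot i))
  obtain ⟨s, t, hst⟩ := Polynomial.exists_prod_X_sub_C_dvd_X_sub_sq hr hsq
  rw [← monic_cubicInX.eq_prod_X_sub_C_of_isRoot (by simp [natDegree_cubicInX]) hr hroot] at hst
  let φ := Polynomial.eval₂RingHom (map Polynomial.C) (C (Polynomial.X : Polynomial k))
  refine ⟨φ s, -φ t, ?_⟩
  have hφ := congrArg φ hst
  rw [map_sub, map_pow, map_mul, show φ (cubicInX k) = _ from eval₂_cubicInX,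
    show φ Polynomial.X = C Polynomial.X from Polynomial.eval₂_X _ _] at hφ
  linear_combination hφ
end

section
/- Let k be an algebraically closed field of characteristic ≠ 2. There exist elements s, t in the ring k[y][[x]] (power series in x with polynomial coefficients in y) such that x - s² = (y² - x(x²-1))·t. -/
/-!
Since `-1` is a square in `k` and `2` is invertible, Hensel's lemma in the `(x)`-adically complete
ring `k[y][[x]]` gives a unit `w` with `w ^ 2 = x ^ 2 - 1`. Then
`g = y ^ 2 - x * w ^ 2`, so `x ≡ (y / w) ^ 2` modulo `g`.
-/

open PowerSeries

theorem PowerSeries.exists_sq_eq_of_sq_eq_constantCoeff {R : Type*} [CommRing R]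
    (h2 : IsUnit (2 : R)) {a : R⟦X⟧} {c : R} (hc : IsUnit c) (hca : c ^ 2 = constantCoeff a) :
    ∃ w : R⟦X⟧, w ^ 2 = a ∧ constantCoeff w = c := by
  let f : Polynomial R⟦X⟧ := Polynomial.X ^ 2 - Polynomial.C a
  have hf : f.Monic := Polynomial.monic_X_pow_sub_C a two_ne_zero
  have hroot : f.eval (C c) ∈ Ideal.span {(X : R⟦X⟧)} := by
    rw [Ideal.mem_span_singleton, X_dvd_iff]
    simp [f, ← hca]
  have hsimple :
      IsUnit (Ideal.Quotient.mk (Ideal.span {(X : R⟦X⟧)}) (f.derivative.eval (C c))) := by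
    have hderiv : f.derivative.eval (C c) = C (2 * c) := by
      rw [map_mul, map_ofNat]; simp [f]; ring
    rw [hderiv]
    exact ((h2.mul hc).map C).map _
  obtain ⟨w, hw, hwc⟩ := HenselianRing.is_henselian f hf (C c) hroot hsimple
  refine ⟨w, by simpa [f, sub_eq_zero] using hw, ?_⟩
  rw [Ideal.mem_span_singleton, X_dvd_iff] at hwc
  simpa [sub_eq_zero] using hwc

theorem exists_sub_sq_eq_mul_of_isUnit {R : Type*} [CommRing R] (x y : R) {w : R}
    (hw : IsUnit w) : ∃ s t : R, x - s ^ 2 = (y ^ 2 - x * w ^ 2) * t := by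
  obtain ⟨u, rfl⟩ := hw
  refine ⟨y * ↑u⁻¹, -(↑u⁻¹) ^ 2, ?_⟩
  linear_combination (-x) * congrArg (· ^ 2) u.mul_inv

theorem x_square_mod_elliptic_in_ky_x
    (k : Type*) [Field k] [IsAlgClosed k] (h2 : (2 : k) ≠ 0) :
    ∃ s t : PowerSeries (Polynomial k),
      (PowerSeries.X : PowerSeries (Polynomial k)) - s ^ 2
        = ((PowerSeries.C (Polynomial.X : Polynomial k)) ^ 2
            - PowerSeries.X * ((PowerSeries.X : PowerSeries (Polynomial k)) ^ 2 - 1))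
          * t := by
  obtain ⟨i, hi⟩ := IsAlgClosed.exists_pow_nat_eq (-1 : k) two_pos
  have hi_unit : IsUnit (Polynomial.C i) := by
    refine Polynomial.isUnit_C.mpr (Ne.isUnit ?_)
    rintro rfl
    norm_num at hi
  have h2_unit : IsUnit (2 : Polynomial k) := by
    simpa only [map_ofNat] using h2.isUnit.map Polynomial.C
  obtain ⟨w, hw, hw0⟩ := PowerSeries.exists_sq_eq_of_sq_eq_constantCoeff h2_unit
    (a := X ^ 2 - 1) hi_unit (by rw [← map_pow, hi]; simp)
  have hw_unit : IsUnit w := isUnit_iff_constantCoeff.mpr (hw0 ▸ hi_unit)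
  rw [← hw]
  exact exists_sub_sq_eq_mul_of_isUnit _ _ hw_unit
end

section
/- Let k be an algebraically closed field of characteristic ≠ 2. There do not exist s, t ∈ k((x,y)) (the fraction field of k[[x,y]]) with x - s² = (y² - x²(x-1))·t such that moreover s, t ∈ k[[x,y]]; i.e., x is not a square modulo y² - x²(x-1) in k[[x,y]]. -/
/-!
If `f` vanishes at the origin together with `∂f/∂xᵢ`, then `xᵢ` is not a square modulo `f`:
from `xᵢ - s² = f t`, constant terms give `s(0) = 0`, and then the `xᵢ`-derivatives at the origin
give `1 - 2 s(0) ∂ᵢs(0) = f(0) ∂ᵢt(0) + t(0) ∂ᵢf(0)`, i.e. `1 = 0`. The nodal cubic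
`y² - x²(x - 1)` is singular at the origin, so this applies to it.
-/

namespace MvPowerSeries

variable {σ R : Type*} [CommRing R]

theorem not_dvd_X_sub_sq [IsReduced R] [Nontrivial R] (i : σ) {f : MvPowerSeries σ R}
    (hf : constantCoeff f = 0) (hf' : constantCoeff (pderiv R i f) = 0) (s : MvPowerSeries σ R) :
    ¬ f ∣ X i - s ^ 2 := by
  rintro ⟨t, h⟩
  have hs : constantCoeff s = 0 := by
    have h₀ := congrArg constantCoeff h
    simp only [map_sub, map_mul, map_pow, constantCoeff_X, hf, zero_mul, zero_sub,
      neg_eq_zero] at h₀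
    exact eq_zero_of_pow_eq_zero h₀
  have h₁ := congrArg (fun g ↦ constantCoeff (pderiv R i g)) h
  simp [hs, hf, hf'] at h₁

end MvPowerSeries

open MvPowerSeries

noncomputable def nodalCubic (R : Type*) [CommRing R] : MvPowerSeries (Fin 2) R :=
  X 1 ^ 2 - X 0 ^ 2 * (X 0 - 1)

theorem constantCoeff_nodalCubic (R : Type*) [CommRing R] :
    constantCoeff (nodalCubic R) = 0 := by
  simp [nodalCubic]

theorem constantCoeff_pderiv_nodalCubic (R : Type*) [CommRing R] (i : Fin 2) :
    constantCoeff (pderiv R i (nodalCubic R)) = 0 := by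
  simp [nodalCubic]

theorem x_not_square_mod_nodal_cubic_power_series_general
    (k : Type*) [Field k] :
    ¬ ∃ s t : MvPowerSeries (Fin 2) k,
      MvPowerSeries.X 0 - s ^ 2
        = ((MvPowerSeries.X 1) ^ 2
            - (MvPowerSeries.X 0 : MvPowerSeries (Fin 2) k) ^ 2
                * (MvPowerSeries.X 0 - 1)) * t := by
  rintro ⟨s, t, h⟩
  exact not_dvd_X_sub_sq 0 (constantCoeff_nodalCubic k) (constantCoeff_pderiv_nodalCubic k 0) s
    ⟨t, h⟩

theorem x_not_square_mod_nodal_cubic_power_series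
    (k : Type*) [Field k] [IsAlgClosed k] (h2 : (2 : k) ≠ 0) :
    ¬ ∃ s t : MvPowerSeries (Fin 2) k,
      MvPowerSeries.X 0 - s ^ 2
        = ((MvPowerSeries.X 1) ^ 2
            - (MvPowerSeries.X 0 : MvPowerSeries (Fin 2) k) ^ 2
                * (MvPowerSeries.X 0 - 1)) * t :=
  x_not_square_mod_nodal_cubic_power_series_general k
end

section
/- Let α and β be distinct monic irreducible polynomials in ℝ[y]. Then (α/β)·(β/α) = (-1)^(deg α · deg β), where (α/β) = 1 if α is congruent to a square modulo β in ℝ[y] and -1 otherwise. -/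
/-!
Monic irreducible real polynomials are `y - a` or irreducible quadratics. If `β` is an
irreducible quadratic, `ℝ[y]/(β)` is a quadratic extension of `ℝ`, hence isomorphic to `ℂ`, where
everything is a square: `(α/β) = 1` for every `α`. Modulo `y - a` a polynomial is a square iff its
value at `a` is nonnegative. So `(β/(y - a)) = 1` for an irreducible quadratic `β`, which has no
real root and is therefore positive, while for `a ≠ b` the symbols `((y - a)/(y - b))` and
`((y - b)/(y - a))` are the signs of `b - a` and `a - b`, whose product is `-1`.
-/

open Polynomial Classical

noncomputable def legendreSymbolR (α β : Polynomial ℝ) : ℤ :=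
  if ∃ s t : Polynomial ℝ, α - s ^ 2 = β * t then 1 else -1

namespace Polynomial

theorem Irreducible.natDegree_eq_one_or_two {p : ℝ[X]} (hp : Irreducible p) :
    p.natDegree = 1 ∨ p.natDegree = 2 := by
  have := hp.natDegree_pos
  have := hp.natDegree_le_two
  omega

theorem Monic.exists_eq_X_sub_C_of_natDegree_eq_one {R : Type*} [Ring R] {p : R[X]}
    (hp : p.Monic) (h1 : p.natDegree = 1) : ∃ a, p = X - C a :=
  ⟨-p.coeff 0, by rw [C_neg, sub_neg_eq_add]; exact hp.eq_X_add_C h1⟩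

theorem Monic.eval_pos_of_irreducible_of_natDegree_eq_two {p : ℝ[X]} (hp : p.Monic)
    (hirr : Irreducible p) (h2 : p.natDegree = 2) (x : ℝ) : 0 < p.eval x :=
  zero_lt_eval_of_roots_lt_of_leadingCoeff_nonneg
    (fun _ hy => absurd hy (hirr.not_isRoot_of_natDegree_ne_one (by omega)))
    (by rw [hp.leadingCoeff]; exact zero_le_one)

end Polynomial

namespace AdjoinRoot

theorem isSquare_mk_iff {R : Type*} [CommRing R] (α β : R[X]) :
    IsSquare (mk β α) ↔ ∃ s t, α - s ^ 2 = β * t := by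
  simp only [isSquare_iff_exists_sq, mk_surjective.exists, ← map_pow, mk_eq_mk]
  rfl

theorem isSquare_mk_X_sub_C_iff {R : Type*} [CommRing R] (α : R[X]) (a : R) :
    IsSquare (mk (X - C a) α) ↔ IsSquare (α.eval a) := by
  let e : AdjoinRoot (X - C a) ≃ₐ[R] R := quotientSpanXSubCAlgEquiv a
  have he : e (mk (X - C a) α) = α.eval a := quotientSpanXSubCAlgEquiv_mk a α
  rw [← he]
  exact ⟨fun h => h.map e, fun h => by simpa only [AlgEquiv.symm_apply_apply] using h.map e.symm⟩

theorem isSquare_of_natDegree_eq_two {β : ℝ[X]} (hβ : Irreducible β) (h2 : β.natDegree = 2)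
    (x : AdjoinRoot β) : IsSquare x := by
  have := Fact.mk hβ
  obtain ⟨z, hz⟩ := IsAlgClosed.exists_aeval_eq_zero ℂ β
    (by rw [degree_eq_natDegree hβ.ne_zero, h2]; decide)
  let φ := liftAlgHom β (Algebra.ofId ℝ ℂ) z hz
  have := (powerBasis hβ.ne_zero).finite
  have hdim : Module.finrank ℝ (AdjoinRoot β) = Module.finrank ℝ ℂ := by
    rw [(powerBasis hβ.ne_zero).finrank, powerBasis_dim, h2, Complex.finrank_real_complex]
  have hinj : Function.Injective φ := φ.toRingHom.injective
  let e := AlgEquiv.ofBijective φ ⟨hinj,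
    (LinearMap.injective_iff_surjective_of_finrank_eq_finrank hdim (f := φ.toLinearMap)).1 hinj⟩
  simpa using (Complex.isSquare (e x)).map e.symm

end AdjoinRoot

theorem legendreSymbolR_X_sub_C (α : ℝ[X]) (a : ℝ) :
    legendreSymbolR α (X - C a) = if 0 ≤ α.eval a then 1 else -1 := by
  simp only [legendreSymbolR, ← AdjoinRoot.isSquare_mk_iff, AdjoinRoot.isSquare_mk_X_sub_C_iff,
    Real.isSquare_iff]

theorem legendreSymbolR_eq_one_of_natDegree_eq_two (α : ℝ[X]) {β : ℝ[X]} (hβ : Irreducible β)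
    (h2 : β.natDegree = 2) : legendreSymbolR α β = 1 :=
  if_pos ((AdjoinRoot.isSquare_mk_iff α β).1 (AdjoinRoot.isSquare_of_natDegree_eq_two hβ h2 _))

theorem legendreSymbolR_X_sub_C_eq_one_of_natDegree_eq_two (a : ℝ) {β : ℝ[X]} (hβ : β.Monic)
    (hβirr : Irreducible β) (h2 : β.natDegree = 2) : legendreSymbolR β (X - C a) = 1 := by
  rw [legendreSymbolR_X_sub_C, if_pos (hβ.eval_pos_of_irreducible_of_natDegree_eq_two hβirr h2 a).le]

theorem quadratic_reciprocity_real_polynomials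
    (α β : Polynomial ℝ) (hα : α.Monic) (hβ : β.Monic)
    (hαirr : Irreducible α) (hβirr : Irreducible β) (hne : α ≠ β) :
    legendreSymbolR α β * legendreSymbolR β α
      = (-1) ^ (α.natDegree * β.natDegree) := by
  rcases hαirr.natDegree_eq_one_or_two with hα1 | hα2 <;>
    rcases hβirr.natDegree_eq_one_or_two with hβ1 | hβ2
  · obtain ⟨a, rfl⟩ := hα.exists_eq_X_sub_C_of_natDegree_eq_one hα1
    obtain ⟨b, rfl⟩ := hβ.exists_eq_X_sub_C_of_natDegree_eq_one hβ1
    have hab : a ≠ b := fun h => hne (h ▸ rfl)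
    rw [legendreSymbolR_X_sub_C, legendreSymbolR_X_sub_C, hα1, hβ1]
    simp only [eval_sub, eval_X, eval_C, sub_nonneg]
    rcases hab.lt_or_gt with h | h <;> simp [h.le, not_le.2 h]
  · obtain ⟨a, rfl⟩ := hα.exists_eq_X_sub_C_of_natDegree_eq_one hα1
    rw [legendreSymbolR_eq_one_of_natDegree_eq_two _ hβirr hβ2,
      legendreSymbolR_X_sub_C_eq_one_of_natDegree_eq_two a hβ hβirr hβ2, hα1, hβ2]
    norm_num
  · obtain ⟨b, rfl⟩ := hβ.exists_eq_X_sub_C_of_natDegree_eq_one hβ1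
    rw [legendreSymbolR_eq_one_of_natDegree_eq_two _ hαirr hα2,
      legendreSymbolR_X_sub_C_eq_one_of_natDegree_eq_two b hα hαirr hα2, hα2, hβ1]
    norm_num
  · rw [legendreSymbolR_eq_one_of_natDegree_eq_two _ hβirr hβ2,
      legendreSymbolR_eq_one_of_natDegree_eq_two _ hαirr hα2, hα2, hβ2]
    norm_num
end
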